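/- Let N ≥ 3, let μ_j, λ_j ∈ (0,1) with μ_j + λ_j = 1 for j = 1,…,N−1, and let A_s ∈ ℝ^{(N−1)×(N−1)} be the tridiagonal matrix with rows indexed by 1,…,N−1 given by: row 1 has entries (2−μ₁)/(1−μ₁) and (1−2μ₁)/(1−μ₁) in columns 1, 2; row j for 2 ≤ j ≤ N−2 has entries μ_j, 2, λ_j in columns j−1, j, j+1; row N−1 has entries (1−2λ_{N−1})/(1−λ_{N−1}) and (2−λ_{N−1})/(1−λ_{N−1}) in columns N−2, N−1; all other entries are zero. Then A_s is strictly diagonally dominant by rows with min_i (|a_{ii}| − Σ_{j≠i} |a_{ij}|) ≥ 1; in particular A_s is invertible and ‖A_s⁻¹‖_∞ ≤ 1. -/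

import Mathlib

/-!
Row diagonal dominance with gap `δ > 0` gives `δ ‖y‖_∞ ≤ ‖A y‖_∞`: at a coordinate `k` where
`|y k|` is maximal, the diagonal term of `(A y) k` outweighs the off-diagonal ones by at least
`δ |y k|`. Applied to `y = A⁻¹ s` with `s` the sign pattern of a row of `A⁻¹`, this bounds every
absolute row sum of `A⁻¹` by `1 / δ`. For the not-a-knot matrix the gap is `1` in every row: in
the middle rows `2 - (μ_j + λ_j) = 1`, and in the two boundary rows
`(2 - t) - |1 - 2t| ≥ 1 - t` for `t ∈ (0, 1)`.
-/

/-- The matrix norm induced by the max norm on `ℝⁿ`: the maximum absolute row sum. -/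
noncomputable def rowSumNorm {n : ℕ} (A : Matrix (Fin n) (Fin n) ℝ) : ℝ :=
  ⨆ i, ∑ j, |A i j|

open Finset Matrix

section DiagonallyDominant

variable {ι : Type*} [Fintype ι] [DecidableEq ι] {A : Matrix ι ι ℝ} {δ : ℝ}

theorem Matrix.mul_abs_le_norm_mulVec_of_diag_dominant (hδ : 0 ≤ δ)
    (hA : ∀ i, ∑ j ∈ univ.erase i, |A i j| + δ ≤ |A i i|) (y : ι → ℝ) (i : ι) :
    δ * |y i| ≤ ‖A *ᵥ y‖ := by
  have : Nonempty ι := ⟨i⟩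
  obtain ⟨k, hk⟩ := Finite.exists_max fun j => |y j|
  have hoff : |∑ j ∈ univ.erase k, A k j * y j| ≤ (∑ j ∈ univ.erase k, |A k j|) * |y k| := by
    rw [sum_mul]
    refine (abs_sum_le_sum_abs _ _).trans (sum_le_sum fun j _ => ?_)
    rw [abs_mul]
    exact mul_le_mul_of_nonneg_left (hk j) (abs_nonneg _)
  calc δ * |y i| ≤ δ * |y k| := mul_le_mul_of_nonneg_left (hk i) hδ
    _ ≤ |A k k| * |y k| - (∑ j ∈ univ.erase k, |A k j|) * |y k| := by
        nlinarith [hA k, abs_nonneg (y k)]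
    _ ≤ |A k k * y k| - |∑ j ∈ univ.erase k, A k j * y j| := by rw [abs_mul]; linarith
    _ ≤ |A k k * y k + ∑ j ∈ univ.erase k, A k j * y j| := abs_sub_abs_le_abs_add _ _
    _ = |(A *ᵥ y) k| := by rw [mulVec, dotProduct, ← add_sum_erase _ _ (mem_univ k)]
    _ ≤ ‖A *ᵥ y‖ := norm_le_pi_norm (A *ᵥ y) k

theorem Matrix.isUnit_of_diag_dominant (hδ : 0 < δ)
    (hA : ∀ i, ∑ j ∈ univ.erase i, |A i j| + δ ≤ |A i i|) : IsUnit A :=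
  (A.isUnit_iff_isUnit_det).2 <| isUnit_iff_ne_zero.2 <|
    det_ne_zero_of_sum_row_lt_diag fun k => by
      simpa using (lt_add_of_pos_right _ hδ).trans_le (hA k)

theorem Matrix.mul_sum_abs_inv_le_one_of_diag_dominant (hδ : 0 < δ)
    (hA : ∀ i, ∑ j ∈ univ.erase i, |A i j| + δ ≤ |A i i|) (i : ι) :
    δ * ∑ j, |A⁻¹ i j| ≤ 1 := by
  set s : ι → ℝ := fun j => SignType.sign (A⁻¹ i j)
  have hrow : (A⁻¹ *ᵥ s) i = ∑ j, |A⁻¹ i j| := by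
    simp only [mulVec, dotProduct, s, self_mul_sign]
  have hs : ‖s‖ ≤ 1 := (pi_norm_le_iff_of_nonneg zero_le_one).2 fun j => by
    rcases lt_trichotomy (A⁻¹ i j) 0 with h | h | h <;> simp [s, h]
  have hAA : A *ᵥ (A⁻¹ *ᵥ s) = s := by
    rw [mulVec_mulVec, mul_nonsing_inv _ ((A.isUnit_iff_isUnit_det).1
      (isUnit_of_diag_dominant hδ hA)), one_mulVec]
  calc δ * ∑ j, |A⁻¹ i j| = δ * |(A⁻¹ *ᵥ s) i| := by
        rw [hrow, abs_of_nonneg (sum_nonneg fun j _ => abs_nonneg _)]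
    _ ≤ ‖A *ᵥ (A⁻¹ *ᵥ s)‖ := mul_abs_le_norm_mulVec_of_diag_dominant hδ.le hA _ i
    _ ≤ 1 := by rwa [hAA]

end DiagonallyDominant

theorem Finset.sum_erase_abs_le_of_support {ι : Type*} [Fintype ι] [DecidableEq ι] {f : ι → ℝ}
    {i : ι} {S : Finset ι} (hf : ∀ j, j ≠ i → j ∉ S → f j = 0) :
    ∑ j ∈ univ.erase i, |f j| ≤ ∑ j ∈ S, |f j| := by
  rw [← sum_filter_ne_zero]
  refine sum_le_sum_of_subset_of_nonneg (fun j hj => ?_) fun j _ _ => abs_nonneg _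
  simp only [mem_filter, mem_erase, ne_eq, abs_eq_zero] at hj
  by_contra hjS
  exact hj.2 (hf j hj.1.1 hjS)

theorem abs_div_one_sub_add_one_le {t : ℝ} (ht0 : 0 ≤ t) (ht1 : t < 1) :
    |(1 - 2 * t) / (1 - t)| + 1 ≤ |(2 - t) / (1 - t)| := by
  have h1 : 0 < 1 - t := by linarith
  rw [abs_div, abs_div, abs_of_pos h1, abs_of_pos (by linarith : 0 < 2 - t),
    div_add_one h1.ne']
  gcongr
  linarith [abs_le.2 (⟨by linarith, by linarith⟩ : -1 ≤ 1 - 2 * t ∧ 1 - 2 * t ≤ 1)]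

noncomputable def notAKnotMatrix (N : ℕ) (μ lam : ℕ → ℝ) :
    Matrix (Fin (N - 1)) (Fin (N - 1)) ℝ :=
  of fun i j =>
    if (i : ℕ) + 1 = 1 then
      (if (j : ℕ) + 1 = 1 then (2 - μ 1) / (1 - μ 1)
       else if (j : ℕ) + 1 = 2 then (1 - 2 * μ 1) / (1 - μ 1) else 0)
    else if (i : ℕ) + 1 = N - 1 then
      (if (j : ℕ) + 1 = N - 2 then (1 - 2 * lam (N - 1)) / (1 - lam (N - 1))
       else if (j : ℕ) + 1 = N - 1 then (2 - lam (N - 1)) / (1 - lam (N - 1)) else 0)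
    else
      (if (j : ℕ) + 1 + 1 = (i : ℕ) + 1 then μ ((i : ℕ) + 1)
       else if (j : ℕ) = (i : ℕ) then 2
       else if (j : ℕ) + 1 = (i : ℕ) + 1 + 1 then lam ((i : ℕ) + 1) else 0)

namespace notAKnotMatrix

variable {N : ℕ} {μ lam : ℕ → ℝ}

theorem offDiag_add_one_le_diag_of_first_row (hN : 3 ≤ N) (hμ : μ 1 ∈ Set.Ioo 0 1)
    {i : Fin (N - 1)} (hi : (i : ℕ) = 0) :
    ∑ j ∈ univ.erase i, |notAKnotMatrix N μ lam i j| + 1 ≤ |notAKnotMatrix N μ lam i i| := by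
  have hoff : ∑ j ∈ univ.erase i, |notAKnotMatrix N μ lam i j|
      ≤ |(1 - 2 * μ 1) / (1 - μ 1)| := by
    calc _ ≤ ∑ j ∈ {⟨1, by omega⟩}, |notAKnotMatrix N μ lam i j| :=
          sum_erase_abs_le_of_support fun j hji hj => by
            simp only [ne_eq, Fin.ext_iff, mem_singleton] at hji hj
            simp only [notAKnotMatrix, of_apply, hi, ↓reduceIte]
            split_ifs <;> first | rfl | omega
      _ = _ := by simp [notAKnotMatrix, hi]
  have hdiag : notAKnotMatrix N μ lam i i = (2 - μ 1) / (1 - μ 1) := by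
    simp [notAKnotMatrix, hi]
  rw [hdiag]
  linarith [abs_div_one_sub_add_one_le hμ.1.le hμ.2]

theorem offDiag_add_one_le_diag_of_last_row (hN : 3 ≤ N) (hlam : lam (N - 1) ∈ Set.Ioo 0 1)
    {i : Fin (N - 1)} (hi : (i : ℕ) + 1 = N - 1) :
    ∑ j ∈ univ.erase i, |notAKnotMatrix N μ lam i j| + 1 ≤ |notAKnotMatrix N μ lam i i| := by
  have hi0 : (i : ℕ) ≠ 0 := by omega
  have hoff : ∑ j ∈ univ.erase i, |notAKnotMatrix N μ lam i j|
      ≤ |(1 - 2 * lam (N - 1)) / (1 - lam (N - 1))| := by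
    calc _ ≤ ∑ j ∈ {⟨N - 3, by omega⟩}, |notAKnotMatrix N μ lam i j| :=
          sum_erase_abs_le_of_support fun j hji hj => by
            simp only [ne_eq, Fin.ext_iff, mem_singleton] at hji hj
            simp only [notAKnotMatrix, of_apply, hi, ↓reduceIte]
            split_ifs <;> first | rfl | omega
      _ = _ := by simp [notAKnotMatrix, hi, hi0, show N - 3 + 1 = N - 2 by omega]
  have hdiag : notAKnotMatrix N μ lam i i = (2 - lam (N - 1)) / (1 - lam (N - 1)) := by
    simp [notAKnotMatrix, hi, hi0, show N - 1 ≠ N - 2 by omega]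
  rw [hdiag]
  linarith [abs_div_one_sub_add_one_le hlam.1.le hlam.2]

theorem offDiag_add_one_le_diag_of_middle_row {i : Fin (N - 1)} (hi0 : (i : ℕ) ≠ 0)
    (hi : (i : ℕ) + 1 ≠ N - 1) (hμ : 0 < μ (i + 1)) (hlam : 0 < lam (i + 1)) (hsum : μ (i + 1) + lam (i + 1) = 1) :
    ∑ j ∈ univ.erase i, |notAKnotMatrix N μ lam i j| + 1 ≤ |notAKnotMatrix N μ lam i i| := by
  have hlt : (i : ℕ) + 1 < N - 1 := by omega
  have hoff : ∑ j ∈ univ.erase i, |notAKnotMatrix N μ lam i j| ≤ μ (i + 1) + lam (i + 1) := by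
    calc _ ≤ ∑ j ∈ {⟨i - 1, by omega⟩, ⟨i + 1, hlt⟩}, |notAKnotMatrix N μ lam i j| :=
          sum_erase_abs_le_of_support fun j hji hj => by
            simp only [ne_eq, Fin.ext_iff, mem_insert, mem_singleton, not_or] at hji hj
            simp only [notAKnotMatrix, of_apply, hi, ↓reduceIte]
            split_ifs <;> first | rfl | omega
      _ = _ := by
        rw [sum_pair (by simp only [ne_eq, Fin.ext_iff]; omega)]
        simp [notAKnotMatrix, hi, hi0, abs_of_pos hμ, abs_of_pos hlam,
          show (i : ℕ) - 1 + 1 = i by omega, show (i : ℕ) + 1 + 1 ≠ i by omega]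
  have hdiag : notAKnotMatrix N μ lam i i = 2 := by simp [notAKnotMatrix, hi, hi0]
  rw [hdiag, abs_two]
  linarith

theorem offDiag_add_one_le_diag (hN : 3 ≤ N)
    (hμlam : ∀ j, 1 ≤ j → j ≤ N - 1 →
      μ j ∈ Set.Ioo (0 : ℝ) 1 ∧ lam j ∈ Set.Ioo (0 : ℝ) 1 ∧ μ j + lam j = 1)
    (i : Fin (N - 1)) :
    ∑ j ∈ univ.erase i, |notAKnotMatrix N μ lam i j| + 1 ≤ |notAKnotMatrix N μ lam i i| := by
  by_cases hi0 : (i : ℕ) = 0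
  · exact offDiag_add_one_le_diag_of_first_row hN (hμlam 1 le_rfl (by omega)).1 hi0
  by_cases hi : (i : ℕ) + 1 = N - 1
  · exact offDiag_add_one_le_diag_of_last_row hN (hμlam (N - 1) (by omega) le_rfl).2.1 hi
  obtain ⟨hμ, hlam, hsum⟩ := hμlam (i + 1) (by omega) (by omega)
  exact offDiag_add_one_le_diag_of_middle_row hi0 hi hμ.1 hlam.1 hsum

end notAKnotMatrix

/-- **The decoupled not-a-knot subsystem is strictly diagonally dominant.**
Let `N ≥ 3` and `μ_j, λ_j ∈ (0,1)` with `μ_j + λ_j = 1` for `j = 1, …, N−1`.  Let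
`A_s ∈ ℝ^{(N−1)×(N−1)}` have rows indexed by `1, …, N−1` (here realized by `Fin (N−1)`
with index `i` standing for row `i+1`): row `1` has entries `(2−μ₁)/(1−μ₁)` and
`(1−2μ₁)/(1−μ₁)` in columns `1, 2`; row `j` (`2 ≤ j ≤ N−2`) has entries `μ_j, 2, λ_j` in
columns `j−1, j, j+1`; row `N−1` has entries `(1−2λ_{N−1})/(1−λ_{N−1})` and
`(2−λ_{N−1})/(1−λ_{N−1})` in columns `N−2, N−1`; all other entries zero.  Then `A_s` is
strictly diagonally dominant by rows with dominance gap at least `1`; in particular `A_s`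
is invertible and `‖A_s⁻¹‖_∞ ≤ 1`. -/
theorem stmt11 (N : ℕ) (hN : 3 ≤ N)
    (μ lam : ℕ → ℝ)
    (hμlam : ∀ j, 1 ≤ j → j ≤ N - 1 →
      μ j ∈ Set.Ioo (0 : ℝ) 1 ∧ lam j ∈ Set.Ioo (0 : ℝ) 1 ∧ μ j + lam j = 1)
    (A : Matrix (Fin (N - 1)) (Fin (N - 1)) ℝ)
    (hA : ∀ i j : Fin (N - 1), A i j =
      if (i : ℕ) + 1 = 1 then
        (if (j : ℕ) + 1 = 1 then (2 - μ 1) / (1 - μ 1)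
         else if (j : ℕ) + 1 = 2 then (1 - 2 * μ 1) / (1 - μ 1) else 0)
      else if (i : ℕ) + 1 = N - 1 then
        (if (j : ℕ) + 1 = N - 2 then (1 - 2 * lam (N - 1)) / (1 - lam (N - 1))
         else if (j : ℕ) + 1 = N - 1 then (2 - lam (N - 1)) / (1 - lam (N - 1)) else 0)
      else
        (if (j : ℕ) + 1 + 1 = (i : ℕ) + 1 then μ ((i : ℕ) + 1)
         else if (j : ℕ) = (i : ℕ) then 2
         else if (j : ℕ) + 1 = (i : ℕ) + 1 + 1 then lam ((i : ℕ) + 1) else 0)) :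
    (∀ i, ∑ j ∈ Finset.univ.erase i, |A i j| + 1 ≤ |A i i|) ∧
    IsUnit A ∧ rowSumNorm A⁻¹ ≤ 1 := by
  obtain rfl : A = notAKnotMatrix N μ lam := Matrix.ext hA
  have hdom := notAKnotMatrix.offDiag_add_one_le_diag hN hμlam
  refine ⟨hdom, isUnit_of_diag_dominant one_pos hdom, Real.iSup_le (fun i => ?_) zero_le_one⟩
  simpa using mul_sum_abs_inv_le_one_of_diag_dominant one_pos hdom i
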